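/- For any s ∈ [r] and any subset A ⊆ [q] with A ⊉ [l] such that [l] ∖ A = {t} is a singleton and l+1 ∉ A, one has (∂σ_{e_s} + σ_{e_s}∂)(ε_A) = a_s ε_A in the pivot resolution T_{1,…,l}. -/

import Mathlib

open MvPolynomial Finset

noncomputable section

/-- `fsign A B` is `0` if `A ∩ B ≠ ∅`, and otherwise `(−1)^{p(A,B)}` where `p(A,B)`
is the number of pairs `(a,b) ∈ A × B` with `a > b`. -/
def fsign {α : Type*} [LinearOrder α] [DecidableEq α] (A B : Finset α) : ℤ :=
  if A ∩ B = ∅ then (-1 : ℤ) ^ (((A ×ˢ B).filter fun p => p.2 < p.1).card) else 0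

/-- The total module underlying the Taylor complex: free over `Q = k[x_1,…,x_n]`
with basis `ε_τ` indexed by all subsets `τ ⊆ [q]`. -/
abbrev TotMod (k : Type*) [Field k] (n q : ℕ) : Type _ :=
  Finset (Fin q) →₀ MvPolynomial (Fin n) k

/-- `m_τ = lcm{m_i : i ∈ τ}`, where `m_i` is the monomial with exponent vector `D i`. -/
def lcmMono (k : Type*) [Field k] (n q : ℕ) (D : Fin q → (Fin n →₀ ℕ))
    (τ : Finset (Fin q)) : MvPolynomial (Fin n) k :=
  monomial (τ.sup D) (1 : k)

/-- The monomial ideal `I = (m_1, …, m_q)`. -/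
def monIdeal (k : Type*) [Field k] (n q : ℕ) (D : Fin q → (Fin n →₀ ℕ)) :
    Ideal (MvPolynomial (Fin n) k) :=
  Ideal.span (Set.range fun i => monomial (D i) (1 : k))

/-- The Taylor differential `∂(ε_τ) = Σ_{j∈τ} sign(j, τ∖{j}) (m_τ/m_{τ∖{j}}) ε_{τ∖{j}}`,
as a linear endomorphism of the total module. -/
def taylorD (k : Type*) [Field k] (n q : ℕ) (D : Fin q → (Fin n →₀ ℕ)) :
    TotMod k n q →ₗ[MvPolynomial (Fin n) k] TotMod k n q :=
  Finsupp.linearCombination _ fun τ =>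
    ∑ j ∈ τ, Finsupp.single (τ \ {j})
      ((fsign {j} (τ \ {j}) : MvPolynomial (Fin n) k) *
        monomial (τ.sup D - (τ \ {j}).sup D) (1 : k))

/-- The degree-`i` piece of the subcomplex of the Taylor complex spanned by the
`ε_τ` with `τ ∈ Ω`: the free submodule with basis `{ε_τ : τ ∈ Ω, |τ| = i}`. -/
def piece (k : Type*) [Field k] (n q : ℕ) (Ω : Set (Finset (Fin q))) (i : ℕ) :
    Submodule (MvPolynomial (Fin n) k) (TotMod k n q) :=
  Finsupp.supported _ _ {τ | τ ∈ Ω ∧ τ.card = i}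

/-- The subcomplex of the Taylor complex spanned by all `ε_τ` with `τ ∈ Ω`. -/
def subcx (k : Type*) [Field k] (n q : ℕ) (Ω : Set (Finset (Fin q))) :
    Submodule (MvPolynomial (Fin n) k) (TotMod k n q) :=
  Finsupp.supported _ _ Ω

/-- The index family of the pivot complex `T_S`: all `τ` with `τ ⊉ S`. -/
def pivotΩ {q : ℕ} (S : Finset (Fin q)) : Set (Finset (Fin q)) := {τ | ¬ S ⊆ τ}

/-- The subcomplex of the Taylor complex spanned by `{ε_τ : τ ∈ Ω}` is a resolution
of `Q/I`: it is exact in homological degrees `≥ 1`, and its zeroth homology is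
identified with `Q/I` via the augmentation `ε_∅ ↦ 1`. -/
def IsResolutionOf (k : Type*) [Field k] (n q : ℕ) (D : Fin q → (Fin n →₀ ℕ))
    (Ω : Set (Finset (Fin q))) : Prop :=
  (∀ i : ℕ, ∀ x ∈ piece k n q Ω (i + 1), taylorD k n q D x = 0 →
      ∃ y ∈ piece k n q Ω (i + 2), taylorD k n q D y = x) ∧
  (∀ x ∈ piece k n q Ω 0,
      (x (∅ : Finset (Fin q)) ∈ monIdeal k n q D ↔
        ∃ y ∈ piece k n q Ω 1, taylorD k n q D y = x))

/-- The Scarf set of `I`: all `t` such that there are two distinct subsets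
`τ ≠ τ'` of `[q]` with `|τ| = t` and `m_τ = m_{τ'}`.  The Scarf number of `I`
is `sInf` of this set; `scarf(I) = ∞` corresponds to this set being empty. -/
def scarfSet (k : Type*) [Field k] (n q : ℕ) (D : Fin q → (Fin n →₀ ℕ)) : Set ℕ :=
  {t | ∃ τ τ' : Finset (Fin q), τ ≠ τ' ∧ τ.card = t ∧
        lcmMono k n q D τ = lcmMono k n q D τ'}


/-- The index set `[l] = {1,…,l}`, realized as the first `l` elements of `Fin q`. -/
def Lset (q l : ℕ) : Finset (Fin q) :=
  Finset.univ.filter fun i => (i : ℕ) < l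

/-- The pivot index `l+1`, realized as the element of `Fin q` with value `l`. -/
def pivElt (q l : ℕ) (hq : l < q) : Fin q := ⟨l, hq⟩

/-- The unique element `t` of `[l] ∖ A` (when it exists). -/
def tOf (q l : ℕ) (hq : l < q) (A : Finset (Fin q)) : Fin q :=
  if h : (Lset q l \ A).Nonempty then (Lset q l \ A).min' h else pivElt q l hq

/-- The sum `Σ_{j ∈ J} sign(j,A) a_{sj} (m_j m_A / m_{A∪{j}}) ε_{A∪{j}}`,
where `c j = a_{sj}`. -/
def sigTerm (k : Type*) [Field k] (n q : ℕ) (D : Fin q → (Fin n →₀ ℕ))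
    (c : Fin q → MvPolynomial (Fin n) k) (A J : Finset (Fin q)) : TotMod k n q :=
  ∑ j ∈ J, Finsupp.single (insert j A)
    ((fsign {j} A : MvPolynomial (Fin n) k) * c j *
      monomial (D j + A.sup D - (insert j A).sup D) (1 : k))

/-- The correction term
`(−1)^{l+1} sign(t,A) a_{st} Σ_{i∈[l]} sign(i, A∪{t}∖{i})
  (m_t m_A / m_{A∪{t}∪{l+1}∖{i}}) ε_{A∪{t}∪{l+1}∖{i}}`. -/
def sigCorr (k : Type*) [Field k] (n q l : ℕ) (hq : l < q)
    (D : Fin q → (Fin n →₀ ℕ)) (c : Fin q → MvPolynomial (Fin n) k)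
    (A : Finset (Fin q)) (t : Fin q) : TotMod k n q :=
  ∑ i ∈ Lset q l, Finsupp.single ((insert (pivElt q l hq) (insert t A)) \ {i})
    ((-1 : MvPolynomial (Fin n) k) ^ (l + 1) *
      (fsign {t} A : MvPolynomial (Fin n) k) * c t *
      (fsign {i} (insert t A \ {i}) : MvPolynomial (Fin n) k) *
      monomial (D t + A.sup D - ((insert (pivElt q l hq) (insert t A)) \ {i}).sup D)
        (1 : k))

/-- The homotopy `σ_{e_s}` (for coefficients `c j = a_{sj}`), defined on basis
elements `ε_A` by the three-case formula of Theorem 5.1 of the paper. -/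
def sigmaMap (k : Type*) [Field k] (n q l : ℕ) (hq : l < q)
    (D : Fin q → (Fin n →₀ ℕ)) (c : Fin q → MvPolynomial (Fin n) k) :
    TotMod k n q →ₗ[MvPolynomial (Fin n) k] TotMod k n q :=
  Finsupp.linearCombination _ fun A =>
    if (A ∩ Lset q l).card ≠ l - 1 then
      sigTerm k n q D c A Aᶜ
    else if pivElt q l hq ∈ A then
      sigTerm k n q D c A (insert (tOf q l hq A) A)ᶜ
    else
      sigTerm k n q D c A (insert (tOf q l hq A) A)ᶜ +
        sigCorr k n q l hq D c A (tOf q l hq A)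

/-- The element `a_s = Σ_{j=1}^q a_{sj} m_j`, for coefficients `c j = a_{sj}`. -/
def aElt (k : Type*) [Field k] (n q : ℕ) (D : Fin q → (Fin n →₀ ℕ))
    (c : Fin q → MvPolynomial (Fin n) k) : MvPolynomial (Fin n) k :=
  ∑ j : Fin q, c j * monomial (D j) (1 : k)
end

/-!
Every map involved is homogeneous for the `ℕⁿ`-grading, so once the monomial coefficients are
divided out the computation takes place in the exterior algebra `⋀ Q^q`: the Taylor
differential becomes `∂ = Σ_i ι_i`, and the `j`-th part of `σ_{e_s}` becomes `a_{sj} e_j ∧ -`,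
except that for `j = t` it is `e_{l+1} ∂_{[l]} e_t` on `ε_A` (with `∂_S = Σ_{i ∈ S} ι_i`). The
division is exact because `m_τ ∣ m_j m_A` for every `ε_τ` that occurs; for the correction term
this is where `m_{l+1} ∣ m_{[l]}` enters. For `j ≠ t` the identity is `∂ e_j + e_j ∂ = 1`; for
`j = t` it follows from `ι_i e_j + e_j ι_i = δ_{ij}` and `ι_i ι_j + ι_j ι_i = 0 = ι_i ι_i`.
-/

section Signs

variable {α : Type*} [LinearOrder α] [DecidableEq α]

theorem fsign_singleton (i : α) (C : Finset α) :
    fsign {i} C = if i ∈ C then 0 else (-1) ^ #{x ∈ C | x < i} := by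
  have hdisj : {i} ∩ C = ∅ ↔ i ∉ C := by simp [Finset.eq_empty_iff_forall_notMem]
  by_cases h : i ∈ C
  · rw [fsign, if_neg (hdisj.not.mpr (not_not.mpr h)), if_pos h]
  · rw [fsign, if_pos (hdisj.mpr h), if_neg h]
    congr 1
    refine card_bij (fun x _ => x.2) ?_ ?_ ?_
    · intro x hx
      simp only [mem_filter, mem_product, mem_singleton] at hx ⊢
      exact ⟨hx.1.2, hx.1.1 ▸ hx.2⟩
    · intro x hx y hy hxy
      simp only [mem_filter, mem_product, mem_singleton] at hx hy
      exact Prod.ext (hx.1.1.trans hy.1.1.symm) hxy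
    · intro y hy
      simp only [mem_filter] at hy
      exact ⟨(i, y), by simp [hy.1, hy.2], rfl⟩

theorem fsign_singleton_of_mem {i : α} {C : Finset α} (h : i ∈ C) : fsign {i} C = 0 := by
  rw [fsign_singleton, if_pos h]

theorem fsign_singleton_mul_self {i : α} {C : Finset α} (h : i ∉ C) :
    fsign {i} C * fsign {i} C = 1 := by
  rw [fsign_singleton, if_neg h, ← mul_pow]
  norm_num

theorem fsign_singleton_insert {i j : α} {C : Finset α} (hij : i ≠ j) (hj : j ∉ C) :
    fsign {i} (insert j C) = (if j < i then -1 else 1) * fsign {i} C := by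
  by_cases hi : i ∈ C
  · rw [fsign_singleton_of_mem hi, fsign_singleton_of_mem (mem_insert_of_mem hi), mul_zero]
  · have hi' : i ∉ insert j C := by simp [hi, hij]
    rw [fsign_singleton, fsign_singleton, if_neg hi, if_neg hi', filter_insert]
    split_ifs with hji
    · rw [card_insert_of_notMem (fun h => hj (mem_filter.mp h).1), pow_succ, mul_comm]
    · rw [one_mul]

end Signs

/- `Finset α →₀ R` is the exterior algebra on `R^α`, `single B 1` being the wedge of the basis
vectors `e_b`, `b ∈ B`, in increasing order; `fsign {j} B` is the sign of `e_j ∧ ε_B`, zero if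
`j ∈ B`. -/
namespace ExteriorChain

variable {α : Type*} [LinearOrder α] [DecidableEq α] {R : Type*} [CommRing R]

noncomputable def wedge (j : α) : Module.End R (Finset α →₀ R) :=
  Finsupp.linearCombination R fun B => Finsupp.single (insert j B) (fsign {j} B : R)

noncomputable def contract (i : α) : Module.End R (Finset α →₀ R) :=
  Finsupp.linearCombination R fun B =>
    if i ∈ B then Finsupp.single (B.erase i) (fsign {i} (B.erase i) : R) else 0

noncomputable def bdOn (S : Finset α) : Module.End R (Finset α →₀ R) := ∑ i ∈ S, contract i

theorem wedge_single (j : α) (B : Finset α) (r : R) :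
    wedge j (Finsupp.single B r) = Finsupp.single (insert j B) (r * fsign {j} B) := by
  rw [wedge, Finsupp.linearCombination_single, Finsupp.smul_single, smul_eq_mul]

theorem wedge_single_of_mem {j : α} {B : Finset α} (h : j ∈ B) (r : R) :
    wedge j (Finsupp.single B r) = 0 := by
  rw [wedge_single, fsign_singleton_of_mem h, Int.cast_zero, mul_zero, Finsupp.single_zero]

theorem contract_single (i : α) (B : Finset α) (r : R) :
    contract i (Finsupp.single B r) =
      if i ∈ B then Finsupp.single (B.erase i) (r * fsign {i} (B.erase i)) else 0 := by
  rw [contract, Finsupp.linearCombination_single]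
  split_ifs
  · rw [Finsupp.smul_single, smul_eq_mul]
  · rw [smul_zero]

theorem contract_single_of_mem {i : α} {B : Finset α} (h : i ∈ B) (r : R) :
    contract i (Finsupp.single B r) = Finsupp.single (B.erase i) (r * fsign {i} (B.erase i)) := by
  rw [contract_single, if_pos h]

theorem contract_single_of_notMem {i : α} {B : Finset α} (h : i ∉ B) (r : R) :
    contract i (Finsupp.single B r) = 0 := by
  rw [contract_single, if_neg h]

theorem bdOn_single (S B : Finset α) (r : R) :
    bdOn S (Finsupp.single B r) =
      ∑ i ∈ S ∩ B, Finsupp.single (B.erase i) (r * fsign {i} (B.erase i)) := by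
  rw [bdOn, LinearMap.sum_apply, ← Finset.sum_ite_mem]
  exact Finset.sum_congr rfl fun i _ => contract_single i B r

theorem bdOn_single_mem_supported {S B : Finset α} {s : Set (Finset α)}
    (h : ∀ i ∈ S, i ∈ B → B.erase i ∈ s) (r : R) :
    bdOn S (Finsupp.single B r) ∈ Finsupp.supported R R s := by
  rw [bdOn_single]
  refine Submodule.sum_mem _ fun i hi => Finsupp.single_mem_supported R _ ?_
  exact h i (mem_inter.mp hi).1 (mem_inter.mp hi).2

theorem contract_mul_wedge_self_add (j : α) :
    contract (R := R) j * wedge j + wedge j * contract j = 1 := by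
  refine Finsupp.lhom_ext fun B r => ?_
  simp only [LinearMap.add_apply, Module.End.mul_apply, Module.End.one_apply]
  by_cases hj : j ∈ B
  · rw [wedge_single_of_mem hj, map_zero, zero_add, contract_single_of_mem hj, wedge_single,
      insert_erase hj, mul_assoc, ← Int.cast_mul, fsign_singleton_mul_self (notMem_erase j B),
      Int.cast_one, mul_one]
  · rw [contract_single_of_notMem hj, map_zero, add_zero, wedge_single,
      contract_single_of_mem (mem_insert_self j B), erase_insert hj, mul_assoc,
      ← Int.cast_mul, fsign_singleton_mul_self hj, Int.cast_one, mul_one]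

theorem contract_mul_wedge_add_of_ne {i j : α} (hij : i ≠ j) :
    contract (R := R) i * wedge j + wedge j * contract i = 0 := by
  refine Finsupp.lhom_ext fun B r => ?_
  simp only [LinearMap.add_apply, Module.End.mul_apply, LinearMap.zero_apply]
  by_cases hi : i ∈ B
  swap
  · have hi' : i ∉ insert j B := by simp [hi, hij]
    rw [contract_single_of_notMem hi, map_zero, add_zero, wedge_single,
      contract_single_of_notMem hi']
  obtain ⟨C, hiC, rfl⟩ : ∃ C, i ∉ C ∧ B = insert i C :=
    ⟨B.erase i, notMem_erase i B, (insert_erase hi).symm⟩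
  by_cases hjC : j ∈ C
  · rw [wedge_single_of_mem (mem_insert_of_mem hjC), map_zero, zero_add,
      contract_single_of_mem hi, erase_insert hiC,
      wedge_single_of_mem hjC]
  rw [wedge_single, contract_single_of_mem (mem_insert_of_mem hi), contract_single_of_mem hi,
    erase_insert hiC, wedge_single, insert_comm, erase_insert (by simp [hiC, hij] : i ∉ insert j C),
    ← Finsupp.single_add, fsign_singleton_insert hij.symm hiC, fsign_singleton_insert hij hjC]
  refine (congrArg _ ?_).trans (Finsupp.single_zero _)
  rcases lt_or_gt_of_ne hij with h | h <;> simp only [h, not_lt_of_gt h, if_true, if_false] <;>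
    push_cast <;> ring

theorem contract_mul_self (i : α) : contract (R := R) i * contract i = 0 := by
  refine Finsupp.lhom_ext fun B r => ?_
  rw [Module.End.mul_apply, LinearMap.zero_apply, contract_single]
  split_ifs
  · exact contract_single_of_notMem (notMem_erase i B) _
  · exact map_zero _

theorem contract_mul_contract_add (i j : α) :
    contract (R := R) i * contract j + contract j * contract i = 0 := by
  obtain rfl | hij := eq_or_ne i j
  · rw [contract_mul_self, add_zero]
  refine Finsupp.lhom_ext fun B r => ?_
  simp only [LinearMap.add_apply, Module.End.mul_apply, LinearMap.zero_apply]
  by_cases hB : i ∈ B ∧ j ∈ B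
  swap
  · rcases not_and_or.mp hB with hi | hj
    · rw [contract_single_of_notMem hi, map_zero, contract_single, apply_ite (contract i),
        contract_single_of_notMem (fun h => hi (mem_of_mem_erase h)), map_zero, ite_self, add_zero]
    · rw [contract_single_of_notMem hj, map_zero, contract_single, apply_ite (contract j),
        contract_single_of_notMem (fun h => hj (mem_of_mem_erase h)), map_zero, ite_self, zero_add]
  obtain ⟨C, hiC, hjC, rfl⟩ : ∃ C, i ∉ C ∧ j ∉ C ∧ B = insert i (insert j C) :=
    ⟨(B.erase i).erase j, by simp, by simp,
      by rw [insert_erase (mem_erase.mpr ⟨hij.symm, hB.2⟩), insert_erase hB.1]⟩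
  have hi : i ∉ insert j C := by simp [hiC, hij]
  rw [contract_single_of_mem (mem_insert_of_mem (mem_insert_self j C)), insert_comm,
    erase_insert (by simp [hjC, hij.symm] : j ∉ insert i C),
    contract_single_of_mem (mem_insert_self i C), erase_insert hiC, insert_comm,
    contract_single_of_mem (mem_insert_self i _), erase_insert hi,
    contract_single_of_mem (mem_insert_self j C), erase_insert hjC, ← Finsupp.single_add,
    fsign_singleton_insert hij.symm hiC, fsign_singleton_insert hij hjC]
  refine (congrArg _ ?_).trans (Finsupp.single_zero _)
  rcases lt_or_gt_of_ne hij with h | h <;> simp only [h, not_lt_of_gt h, if_true, if_false] <;>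
    push_cast <;> ring

theorem bdOn_mul_wedge_add (S : Finset α) (j : α) :
    bdOn (R := R) S * wedge j + wedge j * bdOn S = if j ∈ S then 1 else 0 := by
  rw [bdOn, Finset.sum_mul, Finset.mul_sum, ← Finset.sum_add_distrib,
    ← Finset.sum_ite_eq' S j fun _ => 1]
  refine Finset.sum_congr rfl fun i _ => ?_
  split_ifs with h
  · rw [h, contract_mul_wedge_self_add]
  · exact contract_mul_wedge_add_of_ne h

theorem bdOn_mul_bdOn_add (S T : Finset α) :
    bdOn (R := R) S * bdOn T + bdOn T * bdOn S = 0 := by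
  rw [bdOn, bdOn, Finset.sum_mul_sum, Finset.sum_mul_sum, Finset.sum_comm (s := T),
    ← Finset.sum_add_distrib]
  exact Finset.sum_eq_zero fun i _ => by
    rw [← Finset.sum_add_distrib]
    exact Finset.sum_eq_zero fun j _ => contract_mul_contract_add i j

theorem bdOn_mul_self (S : Finset α) : bdOn (R := R) S * bdOn S = 0 := by
  induction S using Finset.induction_on with
  | empty => rw [bdOn, Finset.sum_empty, zero_mul]
  | insert a S ha ih =>
    have hcross := bdOn_mul_bdOn_add (R := R) {a} S
    rw [bdOn, Finset.sum_singleton] at hcross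
    rw [bdOn, Finset.sum_insert ha, ← bdOn]
    calc (contract a + bdOn S) * (contract a + bdOn S)
        = contract a * contract a + (contract a * bdOn S + bdOn S * contract a)
          + bdOn S * bdOn S := by noncomm_ring
      _ = 0 := by rw [contract_mul_self, hcross, ih, add_zero, add_zero]

theorem bdOn_add_bdOn_compl [Fintype α] (S : Finset α) :
    bdOn (R := R) S + bdOn Sᶜ = bdOn univ :=
  Finset.sum_add_sum_compl S _

theorem bdOn_pivot_homotopy {S T : Finset α} {t p : α} (htS : t ∈ S) (htT : t ∉ T)
    (hpS : p ∉ S) (hpT : p ∈ T) :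
    (bdOn S + bdOn T) * (wedge p * bdOn S * wedge t) + wedge t * bdOn S
      + wedge p * bdOn S * wedge t * bdOn T = (1 : Module.End R (Finset α →₀ R)) := by
  have hSt := bdOn_mul_wedge_add (R := R) S t
  have hTt := bdOn_mul_wedge_add (R := R) T t
  have hSp := bdOn_mul_wedge_add (R := R) S p
  have hTp := bdOn_mul_wedge_add (R := R) T p
  simp only [htS, htT, hpS, hpT, if_true, if_false] at hSt hTt hSp hTp
  set X := bdOn (R := R) S
  set Y := bdOn (R := R) T
  set P := wedge (R := R) p
  set W := wedge (R := R) t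
  calc (X + Y) * (P * X * W) + W * X + P * X * W * Y
      = (X * P + P * X) * X * W - P * (X * X) * W + (Y * P + P * Y) * X * W
        - P * (X * Y + Y * X) * W + P * X * (Y * W + W * Y) + (X * W + W * X) - X * W := by
        noncomm_ring
    _ = 1 := by
        rw [hSp, hTp, hTt, hSt, bdOn_mul_self, bdOn_mul_bdOn_add]
        noncomm_ring

/-- With `S = [l]` and `p = l + 1`: the `j`-th component of `σ_{e_s}` on the `ε_B` with
`[l] ∖ B = {t}` and `l + 1 ∉ B`, monomials divided out. -/
noncomputable def pivotWedge (S : Finset α) (p t j : α) : Module.End R (Finset α →₀ R) :=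
  if j = t then wedge p * bdOn S * wedge t else wedge j

theorem bdOn_univ_mul_pivotWedge_add [Fintype α] {S : Finset α} {p t : α} (htS : t ∈ S)
    (hpS : p ∉ S) (j : α) :
    bdOn univ * pivotWedge S p t j + wedge j * bdOn S + pivotWedge S p t j * bdOn Sᶜ =
      (1 : Module.End R (Finset α →₀ R)) := by
  rw [← bdOn_add_bdOn_compl, pivotWedge]
  split_ifs with hj
  · subst hj
    exact bdOn_pivot_homotopy htS (notMem_compl.mpr htS) hpS (mem_compl.mpr hpS)
  · have hS := bdOn_mul_wedge_add (R := R) S j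
    have hSc := bdOn_mul_wedge_add (R := R) Sᶜ j
    calc (bdOn S + bdOn Sᶜ) * wedge j + wedge j * bdOn S + wedge j * bdOn Sᶜ
        = (bdOn S * wedge j + wedge j * bdOn S) + (bdOn Sᶜ * wedge j + wedge j * bdOn Sᶜ) := by
          noncomm_ring
      _ = 1 := by
          by_cases h : j ∈ S <;> simp [hS, hSc, h]

end ExteriorChain

open ExteriorChain

theorem Finsupp.eq_of_eq_on_supported {ι R M : Type*} [Semiring R] [AddCommMonoid M] [Module R M]
    {f g : (ι →₀ R) →ₗ[R] M} {s : Set ι}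
    (h : ∀ i ∈ s, f (Finsupp.single i 1) = g (Finsupp.single i 1))
    {x : ι →₀ R} (hx : x ∈ Finsupp.supported R R s) : f x = g x := by
  rw [Finsupp.supported_eq_span_single] at hx
  exact LinearMap.eqOn_span' (by rintro _ ⟨i, hi, rfl⟩; exact h i hi) hx

theorem Finsupp.map_mem_of_supported {ι R M : Type*} [Semiring R] [AddCommMonoid M] [Module R M]
    {f : (ι →₀ R) →ₗ[R] M} {s : Set ι} {N : Submodule R M}
    (h : ∀ i ∈ s, f (Finsupp.single i 1) ∈ N)
    {x : ι →₀ R} (hx : x ∈ Finsupp.supported R R s) : f x ∈ N := by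
  rw [Finsupp.supported_eq_span_single] at hx
  exact (Submodule.span_le (p := N.comap f)).mpr (by rintro _ ⟨i, hi, rfl⟩; exact h i hi) hx

section MultidegreeLift

variable {k : Type*} [Field k] {n q : ℕ} (D : Fin q → (Fin n →₀ ℕ))

local notation "Q" => MvPolynomial (Fin n) k

theorem lcmMono_dvd_lcmMono_iff (σ τ : Finset (Fin q)) :
    lcmMono k n q D σ ∣ lcmMono k n q D τ ↔ σ.sup D ≤ τ.sup D := by
  simp [lcmMono, monomial_dvd_monomial]

/-- `ε_τ ↦ (m_e / m_τ) ε_τ`, the exponent subtraction being truncated: the division is exact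
only on `degLE D e`. -/
noncomputable def liftDeg (e : Fin n →₀ ℕ) : Module.End Q (TotMod k n q) :=
  Finsupp.linearCombination _ fun τ => Finsupp.single τ (monomial (e - τ.sup D) 1)

noncomputable def degLE (e : Fin n →₀ ℕ) : Submodule Q (TotMod k n q) :=
  Finsupp.supported Q Q {τ | τ.sup D ≤ e}

variable {D}

theorem liftDeg_single (e : Fin n →₀ ℕ) (τ : Finset (Fin q)) (r : Q) :
    liftDeg D e (Finsupp.single τ r) = Finsupp.single τ (r * monomial (e - τ.sup D) 1) := by
  rw [liftDeg, Finsupp.linearCombination_single, Finsupp.smul_single, smul_eq_mul]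

theorem liftDeg_single_one (e : Fin n →₀ ℕ) (τ : Finset (Fin q)) :
    liftDeg D e (Finsupp.single τ (1 : Q)) =
      monomial (e - τ.sup D) (1 : k) • Finsupp.single τ 1 := by
  rw [liftDeg_single, one_mul, Finsupp.smul_single_one]

theorem degLE_mono {e e' : Fin n →₀ ℕ} (h : e ≤ e') : degLE (k := k) D e ≤ degLE D e' :=
  Finsupp.supported_mono fun _ hτ => le_trans hτ h

theorem single_mem_degLE (τ : Finset (Fin q)) (r : Q) :
    Finsupp.single τ r ∈ degLE D (τ.sup D) :=
  Finsupp.single_mem_supported _ _ (show τ.sup D ≤ τ.sup D from le_rfl)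

theorem wedge_mem_degLE (j : Fin q) {e : Fin n →₀ ℕ} {x : TotMod k n q} (hx : x ∈ degLE D e) :
    wedge j x ∈ degLE D (D j ⊔ e) := by
  refine Finsupp.map_mem_of_supported (fun τ hτ => ?_) hx
  rw [wedge_single]
  refine Finsupp.single_mem_supported _ _ ?_
  rw [Set.mem_ofPred_eq, sup_insert]
  exact sup_le_sup_left hτ _

theorem wedge_single_mem_degLE (j : Fin q) (B : Finset (Fin q)) (r : Q) :
    wedge j (Finsupp.single B r) ∈ degLE D (D j + B.sup D) :=
  degLE_mono (sup_le le_self_add le_add_self) (wedge_mem_degLE j (single_mem_degLE B r))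

theorem bdOn_mem_degLE (S : Finset (Fin q)) {e : Fin n →₀ ℕ} {x : TotMod k n q}
    (hx : x ∈ degLE D e) : bdOn S x ∈ degLE D e := by
  refine Finsupp.map_mem_of_supported (s := {τ : Finset (Fin q) | τ.sup D ≤ e}) (fun τ hτ => ?_) hx
  exact bdOn_single_mem_supported
    (fun i _ _ => show (τ.erase i).sup D ≤ e from (Finset.sup_mono (erase_subset i τ)).trans hτ) 1

theorem monomial_smul_liftDeg (u : Fin n →₀ ℕ) {e : Fin n →₀ ℕ} {x : TotMod k n q}
    (hx : x ∈ degLE D e) : monomial u (1 : k) • liftDeg D e x = liftDeg D (u + e) x := by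
  refine Finsupp.eq_of_eq_on_supported (f := monomial u (1 : k) • liftDeg D e)
    (fun τ hτ => ?_) hx
  rw [LinearMap.smul_apply, liftDeg_single, liftDeg_single, Finsupp.smul_single, smul_eq_mul,
    add_tsub_assoc_of_le hτ, one_mul, one_mul, monomial_mul, one_mul]

theorem taylorD_single_one (τ : Finset (Fin q)) :
    taylorD k n q D (Finsupp.single τ 1) =
      liftDeg D (τ.sup D) (bdOn univ (Finsupp.single τ 1)) := by
  rw [taylorD, Finsupp.linearCombination_single, one_smul, bdOn_single, univ_inter, map_sum]
  refine Finset.sum_congr rfl fun j _ => ?_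
  rw [liftDeg_single, sdiff_singleton_eq_erase, one_mul]

theorem taylorD_liftDeg {e : Fin n →₀ ℕ} {x : TotMod k n q} (hx : x ∈ degLE D e) :
    taylorD k n q D (liftDeg D e x) = liftDeg D e (bdOn univ x) := by
  refine Finsupp.eq_of_eq_on_supported (f := taylorD k n q D ∘ₗ liftDeg D e)
    (g := liftDeg D e ∘ₗ bdOn univ) (fun τ hτ => ?_) hx
  rw [LinearMap.comp_apply, LinearMap.comp_apply, liftDeg_single_one, map_smul,
    taylorD_single_one, monomial_smul_liftDeg _ (bdOn_mem_degLE _ (single_mem_degLE τ 1)),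
    tsub_add_cancel_of_le hτ]

theorem map_liftDeg_eq_sum {φ : Module.End Q (TotMod k n q)}
    {F : Set (Finset (Fin q))} {c : Fin q → Q}
    {ψ : Fin q → Module.End Q (TotMod k n q)}
    (hψ : ∀ B ∈ F, ∀ j, ψ j (Finsupp.single B 1) ∈ degLE D (D j + B.sup D))
    (hφ : ∀ B ∈ F, φ (Finsupp.single B 1) =
      ∑ j, c j • liftDeg D (D j + B.sup D) (ψ j (Finsupp.single B 1)))
    {e : Fin n →₀ ℕ} {x : TotMod k n q} (hx : x ∈ Finsupp.supported Q Q (F ∩ {τ | τ.sup D ≤ e})) :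
    φ (liftDeg D e x) = ∑ j, c j • liftDeg D (D j + e) (ψ j x) := by
  refine (Finsupp.eq_of_eq_on_supported (f := φ ∘ₗ liftDeg D e)
    (g := ∑ j, c j • (liftDeg D (D j + e) ∘ₗ ψ j)) (fun B hB => ?_) hx).trans
    (by simp only [LinearMap.sum_apply, LinearMap.smul_apply, LinearMap.comp_apply])
  rw [LinearMap.comp_apply, liftDeg_single_one, map_smul, hφ B hB.1, Finset.smul_sum,
    LinearMap.sum_apply]
  refine Finset.sum_congr rfl fun j _ => ?_
  rw [smul_comm, monomial_smul_liftDeg _ (hψ B hB.1 j), LinearMap.smul_apply,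
    LinearMap.comp_apply, add_left_comm, tsub_add_cancel_of_le hB.2]

end MultidegreeLift

section PivotHomotopy

variable {k : Type*} [Field k] {n q l : ℕ} {D : Fin q → (Fin n →₀ ℕ)}

local notation "Q" => MvPolynomial (Fin n) k

theorem mem_Lset {x : Fin q} : x ∈ Lset q l ↔ (x : ℕ) < l := by
  simp [Lset]

theorem card_Lset (h : l ≤ q) : #(Lset q l) = l := by
  rw [Lset, Fin.card_filter_val_lt, min_eq_right h]

theorem lt_pivElt_iff (hq : l < q) {x : Fin q} : x < pivElt q l hq ↔ x ∈ Lset q l := by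
  rw [mem_Lset, Fin.lt_def]
  rfl

theorem pivElt_notMem_Lset (hq : l < q) : pivElt q l hq ∉ Lset q l := by
  simp [mem_Lset, pivElt]

theorem tOf_eq (hq : l < q) {A : Finset (Fin q)} {t : Fin q} (hA : Lset q l \ A = {t}) :
    tOf q l hq A = t := by
  rw [tOf, dif_pos (hA ▸ singleton_nonempty t)]
  simp only [hA, min'_singleton]

theorem card_inter_Lset (hq : l < q) {A : Finset (Fin q)} {t : Fin q} (hA : Lset q l \ A = {t}) :
    #(A ∩ Lset q l) = l - 1 := by
  have h := card_inter_add_card_sdiff (Lset q l) A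
  rw [hA, card_singleton, card_Lset hq.le, inter_comm] at h
  omega

theorem Lset_subset_insert {A : Finset (Fin q)} {t : Fin q} (hA : Lset q l \ A = {t}) :
    Lset q l ⊆ insert t A := by
  intro x hx
  by_cases hxA : x ∈ A
  · exact mem_insert_of_mem hxA
  · have : x ∈ Lset q l \ A := mem_sdiff.mpr ⟨hx, hxA⟩
    rw [hA, mem_singleton] at this
    exact this ▸ mem_insert_self x A

theorem fsign_pivElt_erase (hq : l < q) {G : Finset (Fin q)} {i : Fin q} (hL : Lset q l ⊆ G)
    (hp : pivElt q l hq ∉ G) (hi : i ∈ Lset q l) :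
    fsign {pivElt q l hq} (G.erase i) = (-1) ^ (l - 1) := by
  rw [fsign_singleton, if_neg fun h => hp (mem_of_mem_erase h)]
  have hfilter : {x ∈ G.erase i | x < pivElt q l hq} = (Lset q l).erase i := by
    ext x
    simp only [mem_filter, mem_erase, lt_pivElt_iff]
    exact ⟨fun h => ⟨h.1.1, h.2⟩, fun h => ⟨⟨h.1, hL h.2⟩, h.2⟩⟩
  rw [hfilter, card_erase_of_mem hi, card_Lset hq.le]

theorem sigTerm_eq_sum_liftDeg (c : Fin q → Q) (B J : Finset (Fin q)) :
    sigTerm k n q D c B J =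
      ∑ j ∈ J, c j • liftDeg D (D j + B.sup D) (wedge j (Finsupp.single B 1)) := by
  refine Finset.sum_congr rfl fun j _ => ?_
  rw [wedge_single, liftDeg_single, Finsupp.smul_single, smul_eq_mul]
  ring_nf

theorem sigTerm_eq_sum_liftDeg_of_subset (c : Fin q → Q) {B J J' : Finset (Fin q)} (hJ : J ⊆ J')
    (hB : ∀ j ∈ J', j ∉ J → j ∈ B) :
    sigTerm k n q D c B J =
      ∑ j ∈ J', c j • liftDeg D (D j + B.sup D) (wedge j (Finsupp.single B 1)) := by
  rw [sigTerm_eq_sum_liftDeg]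
  exact Finset.sum_subset hJ fun j hj hjJ => by
    rw [wedge_single_of_mem (hB j hj hjJ), map_zero, smul_zero]

theorem sigmaMap_single_of_card_ne (hq : l < q) (c : Fin q → Q) {B : Finset (Fin q)}
    (hB : #(B ∩ Lset q l) ≠ l - 1) :
    sigmaMap k n q l hq D c (Finsupp.single B 1) =
      ∑ j, c j • liftDeg D (D j + B.sup D) (wedge j (Finsupp.single B 1)) := by
  rw [sigmaMap, Finsupp.linearCombination_single, one_smul, if_pos hB]
  exact sigTerm_eq_sum_liftDeg_of_subset c (subset_univ _) fun j _ hj => by simpa using hj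

theorem sigCorr_eq_liftDeg (hq : l < q) (c : Fin q → Q) {B : Finset (Fin q)} {t : Fin q}
    (hB : Lset q l \ B = {t}) (hp : pivElt q l hq ∉ B) :
    sigCorr k n q l hq D c B t = c t • liftDeg D (D t + B.sup D)
      ((wedge (pivElt q l hq) * bdOn (Lset q l) * wedge t : Module.End Q (TotMod k n q))
        (Finsupp.single B 1)) := by
  have htL : t ∈ Lset q l := (mem_sdiff.mp (hB ▸ mem_singleton_self t)).1
  have hL := Lset_subset_insert hB
  have hpG : pivElt q l hq ∉ insert t B :=
    mem_insert.not.mpr (not_or.mpr ⟨fun h => pivElt_notMem_Lset hq (h ▸ htL), hp⟩)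
  have hl : 1 ≤ l := by
    have := mem_Lset.mp htL
    omega
  simp only [Module.End.mul_apply, wedge_single, bdOn_single, inter_eq_left.mpr hL, map_sum,
    liftDeg_single, Finset.smul_sum, Finsupp.smul_single, smul_eq_mul, sigCorr]
  refine Finset.sum_congr rfl fun i hi => ?_
  have hpi : pivElt q l hq ≠ i := fun h => pivElt_notMem_Lset hq (h ▸ hi)
  rw [sdiff_singleton_eq_erase, sdiff_singleton_eq_erase, erase_insert_of_ne hpi,
    fsign_pivElt_erase hq hL hpG hi]
  congr 1
  have hpow : (-1 : Q) ^ (l + 1) = (-1) ^ (l - 1) := by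
    rw [show l + 1 = l - 1 + 2 by omega, pow_add, neg_one_sq, mul_one]
  push_cast
  rw [hpow]
  ring

theorem sigmaMap_single_of_sdiff_eq (hq : l < q) (c : Fin q → Q) {B : Finset (Fin q)}
    {t : Fin q} (hB : Lset q l \ B = {t}) (hp : pivElt q l hq ∉ B) :
    sigmaMap k n q l hq D c (Finsupp.single B 1) = ∑ j, c j • liftDeg D (D j + B.sup D)
      (pivotWedge (Lset q l) (pivElt q l hq) t j (Finsupp.single B 1)) := by
  rw [sigmaMap, Finsupp.linearCombination_single, one_smul,
    if_neg (not_not.mpr (card_inter_Lset hq hB)), if_neg hp, tOf_eq hq hB,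
    sigTerm_eq_sum_liftDeg_of_subset c (J' := univ.erase t) (fun j hj => by simp_all)
      (fun j hj hjJ => by simp_all), sigCorr_eq_liftDeg hq c hB hp,
    ← Finset.sum_erase_add _ _ (mem_univ t), pivotWedge, if_pos rfl]
  congr 1
  refine Finset.sum_congr rfl fun j hj => ?_
  rw [pivotWedge, if_neg (ne_of_mem_erase hj)]

theorem pivotWedge_single_mem_degLE (hq : l < q) (hgap : D (pivElt q l hq) ≤ (Lset q l).sup D)
    {B : Finset (Fin q)} {t : Fin q} (hB : Lset q l \ B = {t}) (j : Fin q) :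
    pivotWedge (Lset q l) (pivElt q l hq) t j (Finsupp.single B (1 : Q)) ∈
      degLE D (D j + B.sup D) := by
  rw [pivotWedge]
  split_ifs with hjt
  · subst hjt
    have hle : D j ⊔ B.sup D ≤ D j + B.sup D := sup_le le_self_add le_add_self
    have hp : D (pivElt q l hq) ≤ D j ⊔ B.sup D :=
      hgap.trans ((Finset.sup_mono (Lset_subset_insert hB)).trans_eq (sup_insert ..))
    rw [Module.End.mul_apply, Module.End.mul_apply]
    exact degLE_mono (sup_le (hp.trans hle) hle)
      (wedge_mem_degLE _ (bdOn_mem_degLE _ (wedge_mem_degLE j (single_mem_degLE B 1))))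
  · exact wedge_single_mem_degLE j B 1

theorem bdOn_Lset_single_mem_supported (hq : l < q) {A : Finset (Fin q)} {t : Fin q}
    (hA : Lset q l \ A = {t}) :
    bdOn (Lset q l) (Finsupp.single A (1 : Q)) ∈
      Finsupp.supported Q Q ({B | #(B ∩ Lset q l) ≠ l - 1} ∩ {τ | τ.sup D ≤ A.sup D}) := by
  refine bdOn_single_mem_supported (fun i hiL hiA => ?_) 1
  refine ⟨?_, Finset.sup_mono (f := D) (erase_subset i A)⟩
  have hi : i ∈ A ∩ Lset q l := mem_inter.mpr ⟨hiA, hiL⟩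
  have hpos := card_pos.mpr ⟨i, hi⟩
  rw [Set.mem_ofPred_eq, erase_inter, card_erase_of_mem hi, card_inter_Lset hq hA] at *
  omega

theorem bdOn_compl_Lset_single_mem_supported (hq : l < q) {A : Finset (Fin q)} {t : Fin q}
    (hA : Lset q l \ A = {t}) (hp : pivElt q l hq ∉ A) :
    bdOn (Lset q l)ᶜ (Finsupp.single A (1 : Q)) ∈ Finsupp.supported Q Q
      ({B | Lset q l \ B = {t} ∧ pivElt q l hq ∉ B} ∩ {τ | τ.sup D ≤ A.sup D}) := by
  refine bdOn_single_mem_supported (fun i hiL _ => ?_) 1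
  refine ⟨⟨?_, fun h => hp (mem_of_mem_erase h)⟩, Finset.sup_mono (f := D) (erase_subset i A)⟩
  rw [← hA]
  ext x
  simp only [mem_sdiff, mem_erase]
  grind [mem_compl]

end PivotHomotopy

theorem homotopy_on_basis_without_pivot_general {k : Type*} [Field k] {n q l : ℕ}
    (hq : l < q)
    (D : Fin q → (Fin n →₀ ℕ))
    (hgap : lcmMono k n q D {pivElt q l hq} ∣ lcmMono k n q D (Lset q l))
    (r : ℕ) (a : Fin r → Fin q → MvPolynomial (Fin n) k)
    (s : Fin r) (A : Finset (Fin q)) (t : Fin q)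
    (hA : Lset q l \ A = {t}) (hpiv : pivElt q l hq ∉ A) :
    taylorD k n q D (sigmaMap k n q l hq D (a s) (Finsupp.single A 1)) +
      sigmaMap k n q l hq D (a s) (taylorD k n q D (Finsupp.single A 1)) =
    aElt k n q D (a s) • Finsupp.single A 1 := by
  have htL : t ∈ Lset q l := (mem_sdiff.mp (hA ▸ mem_singleton_self t)).1
  have hgap' : D (pivElt q l hq) ≤ (Lset q l).sup D := by
    simpa using (lcmMono_dvd_lcmMono_iff D _ _).mp hgap
  have hσdL := map_liftDeg_eq_sum (fun B _ j => wedge_single_mem_degLE (D := D) j B 1)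
    (fun B hB => sigmaMap_single_of_card_ne hq (a s) hB) (bdOn_Lset_single_mem_supported hq hA)
  have hσdLc := map_liftDeg_eq_sum (fun B hB => pivotWedge_single_mem_degLE hq hgap' hB.1)
    (fun B hB => sigmaMap_single_of_sdiff_eq hq (a s) hB.1 hB.2)
    (bdOn_compl_Lset_single_mem_supported hq hA hpiv)
  rw [sigmaMap_single_of_sdiff_eq hq (a s) hA hpiv, taylorD_single_one,
    ← bdOn_add_bdOn_compl (Lset q l), LinearMap.add_apply, map_add, map_add, hσdL, hσdLc,
    map_sum, ← sum_add_distrib, ← sum_add_distrib, aElt, sum_smul]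
  refine Finset.sum_congr rfl fun j _ => ?_
  have hchain := congrArg (fun φ => φ (Finsupp.single A (1 : MvPolynomial (Fin n) k)))
    (bdOn_univ_mul_pivotWedge_add htL (pivElt_notMem_Lset hq) j)
  simp only [LinearMap.add_apply, Module.End.mul_apply, Module.End.one_apply] at hchain
  rw [map_smul, taylorD_liftDeg (pivotWedge_single_mem_degLE hq hgap' hA j), ← smul_add, ← smul_add,
    ← map_add, ← map_add, ← add_assoc, hchain, liftDeg_single_one, add_tsub_cancel_right, smul_smul]

/-- **Lemma 5.4 of the paper.**
For any `s ∈ [r]` and any `A ⊆ [q]` with `[l] ∖ A = {t}` a singleton and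
`l+1 ∉ A`, one has `(∂σ_{e_s} + σ_{e_s}∂)(ε_A) = a_s ε_A` in the pivot
resolution `T_{1,…,l}`. -/
theorem homotopy_on_basis_without_pivot {k : Type*} [Field k] {n q l : ℕ}
    (hl : 2 ≤ l) (hq : l < q)
    (D : Fin q → (Fin n →₀ ℕ))
    (hne : ∀ i : Fin q, D i ≠ 0)
    (hmin : ∀ i j : Fin q, i ≠ j → ¬ lcmMono k n q D {i} ∣ lcmMono k n q D {j})
    (hgap : lcmMono k n q D {pivElt q l hq} ∣ lcmMono k n q D (Lset q l))
    (r : ℕ) (a : Fin r → Fin q → MvPolynomial (Fin n) k)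
    (s : Fin r) (A : Finset (Fin q)) (t : Fin q)
    (hA : Lset q l \ A = {t}) (hpiv : pivElt q l hq ∉ A) :
    taylorD k n q D (sigmaMap k n q l hq D (a s) (Finsupp.single A 1)) +
      sigmaMap k n q l hq D (a s) (taylorD k n q D (Finsupp.single A 1)) =
    aElt k n q D (a s) • Finsupp.single A 1 :=
  homotopy_on_basis_without_pivot_general hq D hgap r a s A t hA hpiv
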